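/- The group ℤ × F₂ does not satisfy the Howson property: the finitely generated subgroups H = ⟨a, b⟩ and H' = ⟨ta, b⟩ have intersection H ∩ H' equal to the normal closure of b in F₂, which is not finitely generated. -/

import Mathlib

namespace Stmt8

abbrev G := Multiplicative ℤ × FreeGroup (Fin 2)

def t : G := (Multiplicative.ofAdd 1, 1)
def a : G := (1, FreeGroup.of 0)
def b : G := (1, FreeGroup.of 1)

abbrev F := FreeGroup (Fin 2)
abbrev Z := Multiplicative ℤ
abbrev R := ℤ →₀ ℤ

/-- exponent sum of the letter `0`. -/
def sg : F →* Z := FreeGroup.lift (fun i => if i = 0 then Multiplicative.ofAdd 1 else 1)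

@[simp] lemma sg_of0 : sg (FreeGroup.of 0) = Multiplicative.ofAdd 1 := by
  simp [sg]

@[simp] lemma sg_of1 : sg (FreeGroup.of 1) = 1 := by
  simp [sg]

def j : F →* G := sg.prod (MonoidHom.id F)

lemma range_of_eq : (Set.range (FreeGroup.of : Fin 2 → F)) = {FreeGroup.of 0, FreeGroup.of 1} := by
  ext x
  simp [Fin.exists_fin_two, eq_comm]

lemma closure_ab : (Subgroup.closure {a, b} : Subgroup G) =
    (MonoidHom.inr Z F).range := by
  rw [MonoidHom.range_eq_map, ← FreeGroup.closure_range_of (Fin 2),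
    MonoidHom.map_closure, range_of_eq]
  congr 1
  ext x
  simp [a, b, Prod.ext_iff, or_comm, eq_comm]

lemma closure_tab : (Subgroup.closure {t * a, b} : Subgroup G) = j.range := by
  rw [MonoidHom.range_eq_map, ← FreeGroup.closure_range_of (Fin 2),
    MonoidHom.map_closure, range_of_eq]
  congr 1
  ext x
  simp [t, a, b, j, Prod.ext_iff, or_comm, eq_comm]

lemma inter_eq_map_ker :
    (Subgroup.closure {a, b} ⊓ Subgroup.closure {t * a, b} : Subgroup G) =
      sg.ker.map (MonoidHom.inr Z F) := by
  rw [closure_ab, closure_tab]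
  ext ⟨z, w⟩
  simp only [Subgroup.mem_inf, MonoidHom.mem_range, Subgroup.mem_map, MonoidHom.mem_ker,
    MonoidHom.inr_apply, j, MonoidHom.prod_apply, MonoidHom.id_apply, Prod.mk.injEq]
  constructor
  · rintro ⟨⟨w1, _, hw1b⟩, ⟨w2, hw2a, hw2b⟩⟩
    rename_i hw1a
    exact ⟨w, by rw [← hw2b, hw2a, ← hw1a], hw1a, rfl⟩
  · rintro ⟨w', hker', h1, rfl⟩
    exact ⟨⟨w', h1, rfl⟩, ⟨w', by rw [hker', h1], rfl⟩⟩

lemma ker_sg : sg.ker = Subgroup.normalClosure ({FreeGroup.of 1} : Set F) := by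
  apply le_antisymm
  · intro w hw
    rw [MonoidHom.mem_ker] at hw
    set N := Subgroup.normalClosure ({FreeGroup.of 1} : Set F)
    let q : F →* F ⧸ N := QuotientGroup.mk' N
    let φ : Z →* F ⧸ N := zpowersHom _ (q (FreeGroup.of 0))
    have hq : q = φ.comp sg := by
      apply FreeGroup.ext_hom
      intro i
      fin_cases i
      · simp [φ, zpowersHom_apply]
      · have : q (FreeGroup.of 1) = 1 := by
          rw [QuotientGroup.mk'_apply, QuotientGroup.eq_one_iff]
          exact Subgroup.subset_normalClosure (Set.mem_singleton _)
        simp [this, φ]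
    have : q w = 1 := by rw [hq]; simp [hw]
    rwa [QuotientGroup.mk'_apply, QuotientGroup.eq_one_iff] at this
  · apply Subgroup.normalClosure_le_normal
    intro x hx
    rw [Set.mem_singleton_iff] at hx
    subst hx
    simp [SetLike.mem_coe, MonoidHom.mem_ker]

section Detector

noncomputable def shift : R ≃+ R := Finsupp.domCongr (Equiv.addRight (1 : ℤ))

noncomputable def A : MulAut (Multiplicative R) := AddEquiv.toMultiplicative shift

noncomputable def ψ : Z →* MulAut (Multiplicative R) := zpowersHom _ A

abbrev W := SemidirectProduct (Multiplicative R) Z ψ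

def u : Z := Multiplicative.ofAdd 1
noncomputable def v : Multiplicative R := Multiplicative.ofAdd (Finsupp.single 0 1)

noncomputable def φW : F →* W := FreeGroup.lift
  (fun i => if i = 0 then SemidirectProduct.inr u else SemidirectProduct.inl v)

@[simp] lemma φW_of0 : φW (FreeGroup.of 0) = SemidirectProduct.inr u := by simp [φW]
@[simp] lemma φW_of1 : φW (FreeGroup.of 1) = SemidirectProduct.inl v := by simp [φW]

lemma rightHom_φW : (SemidirectProduct.rightHom).comp φW = sg := by
  apply FreeGroup.ext_hom
  intro i
  fin_cases i <;> simp [u]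

lemma A_apply (n : ℤ) : A (Multiplicative.ofAdd (Finsupp.single n 1))
    = Multiplicative.ofAdd (Finsupp.single (n + 1) 1) := by
  show Multiplicative.ofAdd (shift (Finsupp.single n 1)) = _
  rw [shift, Finsupp.domCongr_apply, Finsupp.equivMapDomain_single, Equiv.coe_addRight]

lemma A_symm_apply (n : ℤ) : A⁻¹ (Multiplicative.ofAdd (Finsupp.single n 1))
    = Multiplicative.ofAdd (Finsupp.single (n - 1) 1) := by
  show Multiplicative.ofAdd (shift.symm (Finsupp.single n 1)) = _
  rw [shift, Finsupp.domCongr_symm, Finsupp.domCongr_apply, Equiv.addRight_symm,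
    Finsupp.equivMapDomain_single, Equiv.coe_addRight]
  have hb : (fun x => x + -1) n = n - 1 := by ring
  rw [hb]

lemma A_pow (m : ℤ) : (A ^ m) v = Multiplicative.ofAdd (Finsupp.single m 1) := by
  induction m using Int.induction_on with
  | zero => simp [v]
  | succ n ih =>
      have h : ((n : ℤ) + 1) = 1 + (n : ℤ) := by ring
      rw [h, zpow_add, zpow_one, MulAut.mul_apply, ih, A_apply]
      congr 1
      ring_nf
  | pred n ih =>
      have h : (-(n : ℤ) - 1) = (-1) + (-(n : ℤ)) := by ring
      rw [h, zpow_add, MulAut.mul_apply, ih]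
      have h1 : (A ^ (-1 : ℤ)) = A⁻¹ := by simp
      rw [h1, A_symm_apply]
      congr 1
      ring_nf

def c (k : ℤ) : F := (FreeGroup.of 0) ^ (-k) * FreeGroup.of 1 * (FreeGroup.of 0) ^ k

lemma c_mem_ker (k : ℤ) : c k ∈ sg.ker := by
  simp [MonoidHom.mem_ker, c, map_mul, map_zpow]

lemma φW_c (k : ℤ) :
    φW (c k) = SemidirectProduct.inl (Multiplicative.ofAdd (Finsupp.single (-k) 1)) := by
  have h : φW (c k) = SemidirectProduct.inr (u ^ (-k)) * SemidirectProduct.inl v *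
      SemidirectProduct.inr ((u ^ (-k))⁻¹) := by
    simp [c, map_mul, map_zpow, ← zpow_neg]
  rw [h, ← SemidirectProduct.inl_aut]
  congr 1
  have h2 : ψ (u ^ (-k)) = A ^ (-k) := by
    simp [ψ, zpowersHom_apply, u, ← ofAdd_zsmul]
  rw [h2, A_pow]

end Detector

/-- supported-in-U subgroup of `Multiplicative R` -/
noncomputable def Γ (U : Set ℤ) : Subgroup (Multiplicative R) where
  carrier := {x | ↑(Multiplicative.toAdd x).support ⊆ U}
  one_mem' := by simp
  mul_mem' := by
    intro x y hx hy
    refine Set.Subset.trans ?_ (Set.union_subset hx hy)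
    intro i hi
    have h := Finsupp.support_add (g₁ := Multiplicative.toAdd x) (g₂ := Multiplicative.toAdd y)
    exact_mod_cast Set.mem_of_mem_of_subset hi (by exact_mod_cast h)
  inv_mem' := by
    intro x hx
    simpa using hx

/-- In `ℤ × F₂`, the finitely generated subgroups `H = ⟨a,b⟩` and
`H' = ⟨ta, b⟩` intersect in (the copy of) the normal closure of `b` in `F₂`,
which is not finitely generated; so `ℤ × F₂` fails the Howson property. -/
theorem stmt8 :
    (Subgroup.closure {a, b} : Subgroup G).FG ∧
      (Subgroup.closure {t * a, b} : Subgroup G).FG ∧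
      (Subgroup.closure {a, b} ⊓ Subgroup.closure {t * a, b} : Subgroup G) =
        (Subgroup.normalClosure ({FreeGroup.of 1} : Set (FreeGroup (Fin 2)))).map
          (MonoidHom.inr (Multiplicative ℤ) (FreeGroup (Fin 2))) ∧
      ¬ (Subgroup.closure {a, b} ⊓ Subgroup.closure {t * a, b} : Subgroup G).FG := by
  classical
  have hmain : (Subgroup.closure {a, b} ⊓ Subgroup.closure {t * a, b} : Subgroup G) =
      sg.ker.map (MonoidHom.inr Z F) := inter_eq_map_ker
  refine ⟨⟨{a, b}, by simp⟩, ⟨{t * a, b}, by simp⟩, by rw [hmain, ker_sg], ?_⟩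
  rw [hmain]
  rintro ⟨S, hS⟩
  -- project to the free group
  have hker : Subgroup.closure ((fun p : G => p.2) '' ↑S) = sg.ker := by
    have h := congrArg (Subgroup.map (MonoidHom.snd Z F)) hS
    rwa [MonoidHom.map_closure, Subgroup.map_map, MonoidHom.snd_comp_inr,
      Subgroup.map_id] at h
  set S' : Set F := (fun p : G => p.2) '' ↑S with hS'def
  have hS'fin : S'.Finite := (S.finite_toSet).image _
  have hS'sub : S' ⊆ (sg.ker : Set F) := hker ▸ Subgroup.subset_closure
  set L : Set (Multiplicative R) := (fun s => (φW s).left) '' S' with hLdef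
  have hLfin : L.Finite := hS'fin.image _
  have hU : (⋃ x ∈ L, ((Multiplicative.toAdd x).support : Set ℤ)).Finite :=
    hLfin.biUnion (fun x _ => (Multiplicative.toAdd x).support.finite_toSet)
  set U := ⋃ x ∈ L, ((Multiplicative.toAdd x).support : Set ℤ) with hUdef
  -- every element of ker sg maps into map inl (closure L)
  have key : ∀ w ∈ sg.ker, φW w ∈ (Subgroup.closure L).map
      (SemidirectProduct.inl : Multiplicative R →* W) := by
    intro w hw
    rw [← hker] at hw
    have hmem : φW w ∈ (Subgroup.closure S').map φW := Subgroup.mem_map_of_mem _ hw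
    rw [MonoidHom.map_closure] at hmem
    have himg : φW '' S' ⊆ (SemidirectProduct.inl : Multiplicative R →* W) '' L := by
      rintro x ⟨s, hs, rfl⟩
      refine ⟨(φW s).left, ⟨s, hs, rfl⟩, ?_⟩
      have hr : (φW s).right = 1 := by
        have h := congrArg (fun f => f s) rightHom_φW
        simp only [MonoidHom.comp_apply] at h
        rw [show SemidirectProduct.rightHom (φW s) = (φW s).right from rfl] at h
        rw [h]
        exact hS'sub hs
      exact SemidirectProduct.ext rfl hr.symm
    rw [MonoidHom.map_closure]
    exact Subgroup.closure_mono himg hmem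
  -- closure L is supported in U
  have hΓ : Subgroup.closure L ≤ Γ U := by
    rw [Subgroup.closure_le]
    intro x hx
    exact Set.subset_iUnion₂ (s := fun x _ => ((Multiplicative.toAdd x).support : Set ℤ)) x hx
  -- pick m outside U
  obtain ⟨m, hm⟩ := (hU.infinite_compl).nonempty
  have hc := key (c (-m)) (c_mem_ker _)
  rw [φW_c] at hc
  obtain ⟨r, hr, hrr⟩ := hc
  have hre : r = Multiplicative.ofAdd (Finsupp.single (-(-m)) 1) :=
    SemidirectProduct.inl_injective hrr
  rw [hre] at hr
  have hsupp := hΓ hr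
  have hmem : m ∈ U := by
    apply hsupp
    simp [Finsupp.support_single_ne_zero]
  exact hm hmem

end Stmt8
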